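/- Let q be an odd prime power and f = x⁴ + ax³y + bx²y² + cxy³ + dy⁴ a separable homogeneous quartic over F_q with discriminant Δ (of f(x,1)). Define j(f) = 256(b² − 3ac + 12d)³/Δ. Then j is invariant under the PGL₂(F_q) action: j(Γ(f)) = j(f) for every Γ ∈ PGL₂(F_q). -/

import Mathlib

/-! Write `M = [[α, β], [γ, δ]]` and `M·x = (α x + β) / (γ x + δ)`. Over `K` the form factors as
`f = ∏ (x - rᵢ y)`, and substituting by `adj M` turns each factor into `(γ rᵢ + δ)(x - (M·rᵢ) y)`;
so the roots of `g(x,1)` are the `M·rᵢ`, and comparing leading coefficients gives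
`u = ∏ (γ rᵢ + δ)`. Since `M·x - M·y = det M (x - y) / ((γ x + δ)(γ y + δ))`, the three products
`(r₀ - r₁)(r₂ - r₃)`, `(r₀ - r₂)(r₃ - r₁)`, `(r₀ - r₃)(r₁ - r₂)` of root differences over the
pairings of the roots are all multiplied by `det(M)² / u`. In terms of these products `A, B, C`,
`b² - 3ac + 12d = -(AB + BC + CA)` and `Δ = (ABC)²`, so `j = 256 (-(AB + BC + CA))³ / (ABC)²` is
homogeneous of degree `0` in `(A, B, C)`.
The roots `r'` of `g` are the `M·rᵢ` only up to order, so `Δ` is transported through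
`Δ = ∏ₖ P'(rₖ)`, which depends only on `P = ∏ (X - rₖ)`. -/

open MvPolynomial

/-- The dehomogenization `f(x,1)` of a bivariate polynomial. -/
noncomputable def dehom {F : Type*} [CommRing F] (f : MvPolynomial (Fin 2) F) :
    Polynomial F :=
  MvPolynomial.aeval ![Polynomial.X, 1] f

/-- Linear substitution of the variables of a bivariate polynomial by a matrix `N`:
`(substM N f)(v) = f(N·v)`. -/
noncomputable def substM {F : Type*} [Field F]
    (N : Matrix (Fin 2) (Fin 2) F) (f : MvPolynomial (Fin 2) F) :
    MvPolynomial (Fin 2) F :=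
  MvPolynomial.aeval (fun i => C (N i 0) * X 0 + C (N i 1) * X 1) f

/-- The monic homogeneous quartic `x⁴ + ax³y + bx²y² + cxy³ + dy⁴`. -/
noncomputable def quarticPoly {F : Type*} [Field F] (a b c d : F) :
    MvPolynomial (Fin 2) F :=
  X 0 ^ 4 + C a * X 0 ^ 3 * X 1 + C b * X 0 ^ 2 * X 1 ^ 2 +
    C c * X 0 * X 1 ^ 3 + C d * X 1 ^ 4

/-- The discriminant `∏_{i<j} (rᵢ − rⱼ)²` of a quartic with roots `r 0, …, r 3`. -/
noncomputable def discOfRoots {K : Type*} [Field K] (r : Fin 4 → K) : K :=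
  ∏ i, ∏ j ∈ Finset.univ.filter (fun j => i < j), (r i - r j) ^ 2

open Polynomial hiding X C

section Dehomogenization

variable {F : Type*} [CommRing F]

theorem dehom_X_sub_C_mul_X (x : F) :
    dehom (X 0 - C x * X 1) = Polynomial.X - Polynomial.C x := by
  simp [dehom]

theorem dehom_prod_X_sub_C_mul_X {ι : Type*} [Fintype ι] (v : ι → F) :
    dehom (∏ i, (X 0 - C (v i) * X 1)) = ∏ i, (Polynomial.X - Polynomial.C (v i)) := by
  simp only [dehom, map_prod]
  exact Finset.prod_congr rfl fun i _ => dehom_X_sub_C_mul_X (v i)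

theorem map_dehom {K : Type*} [CommRing K] (φ : F →+* K) (f : MvPolynomial (Fin 2) F) :
    (dehom f).map φ = dehom (MvPolynomial.map φ f) := by
  induction f using MvPolynomial.induction_on with
  | C a => simp [dehom]
  | add p q hp hq => simp_all [dehom]
  | mul_X p i hp => fin_cases i <;> simp_all [dehom]

end Dehomogenization

section Quartic

variable {F : Type*} [Field F]

theorem dehom_quarticPoly (a b c d : F) :
    dehom (quarticPoly a b c d) = Polynomial.X ^ 4 + Polynomial.C a * Polynomial.X ^ 3 +
      Polynomial.C b * Polynomial.X ^ 2 + Polynomial.C c * Polynomial.X + Polynomial.C d := by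
  simp [dehom, quarticPoly]

theorem map_quarticPoly {K : Type*} [Field K] (φ : F →+* K) (a b c d : F) :
    MvPolynomial.map φ (quarticPoly a b c d) = quarticPoly (φ a) (φ b) (φ c) (φ d) := by
  simp [quarticPoly]

theorem map_substM {K : Type*} [Field K] (φ : F →+* K) (N : Matrix (Fin 2) (Fin 2) F)
    (f : MvPolynomial (Fin 2) F) :
    MvPolynomial.map φ (substM N f) = substM (φ.mapMatrix N) (MvPolynomial.map φ f) := by
  induction f using MvPolynomial.induction_on with
  | C a => simp [substM]
  | add p q hp hq => simp_all [substM]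
  | mul_X p i hp => simp_all [substM]

theorem quarticPoly_coeffs_eq_of_dehom_eq {a b c d a' b' c' d' : F}
    (h : dehom (quarticPoly a b c d) = dehom (quarticPoly a' b' c' d')) :
    a = a' ∧ b = b' ∧ c = c' ∧ d = d' := by
  rw [dehom_quarticPoly, dehom_quarticPoly] at h
  have hcoeff n := congrArg (Polynomial.coeff · n) h
  refine ⟨?_, ?_, ?_, ?_⟩
  · simpa using hcoeff 3
  · simpa using hcoeff 2
  · simpa using hcoeff 1
  · simpa using hcoeff 0

theorem quarticPoly_vieta (v : Fin 4 → F) :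
    quarticPoly (-(v 0 + v 1 + v 2 + v 3))
      (v 0 * v 1 + v 0 * v 2 + v 0 * v 3 + v 1 * v 2 + v 1 * v 3 + v 2 * v 3)
      (-(v 0 * v 1 * v 2 + v 0 * v 1 * v 3 + v 0 * v 2 * v 3 + v 1 * v 2 * v 3))
      (v 0 * v 1 * v 2 * v 3) = ∏ i, (X 0 - C (v i) * X 1) := by
  simp only [quarticPoly, Fin.prod_univ_four, map_neg, map_add, map_mul]
  ring

theorem quarticPoly_coeffs_of_dehom_eq_prod {a b c d : F} {v : Fin 4 → F}
    (h : dehom (quarticPoly a b c d) = ∏ i, (Polynomial.X - Polynomial.C (v i))) :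
    a = -(v 0 + v 1 + v 2 + v 3) ∧
      b = v 0 * v 1 + v 0 * v 2 + v 0 * v 3 + v 1 * v 2 + v 1 * v 3 + v 2 * v 3 ∧
      c = -(v 0 * v 1 * v 2 + v 0 * v 1 * v 3 + v 0 * v 2 * v 3 + v 1 * v 2 * v 3) ∧
      d = v 0 * v 1 * v 2 * v 3 :=
  quarticPoly_coeffs_eq_of_dehom_eq (by rw [h, quarticPoly_vieta, dehom_prod_X_sub_C_mul_X])

end Quartic

section LinearFactors

variable {R : Type*} [CommRing R]

theorem coeff_prod_C_mul_X_sub_C {ι : Type*} [Fintype ι] (t s : ι → R) :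
    (∏ i, (Polynomial.C (t i) * Polynomial.X - Polynomial.C (s i))).coeff (Fintype.card ι) =
      ∏ i, t i := by
  have hdeg i : (Polynomial.C (t i) * Polynomial.X - Polynomial.C (s i)).natDegree ≤ 1 := by
    rw [sub_eq_add_neg, ← Polynomial.C_neg]
    exact natDegree_linear_le
  simpa using coeff_prod_of_natDegree_le Finset.univ _ 1 fun i _ => hdeg i

theorem roots_prod_X_sub_C_univ [IsDomain R] {ι : Type*} [Fintype ι] (v : ι → R) :
    (∏ i, (Polynomial.X - Polynomial.C (v i))).roots = Finset.univ.val.map v := by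
  have := roots_multiset_prod_X_sub_C (Finset.univ.val.map v)
  rwa [Multiset.map_map] at this

theorem prod_comp_eq_of_prod_X_sub_C_eq [IsDomain R] {M : Type*} [CommMonoid M] {ι : Type*}
    [Fintype ι] {v w : ι → R}
    (h : ∏ i, (Polynomial.X - Polynomial.C (v i)) = ∏ i, (Polynomial.X - Polynomial.C (w i)))
    (g : R → M) : ∏ i, g (v i) = ∏ i, g (w i) := by
  have hroots := congrArg Polynomial.roots h
  rw [roots_prod_X_sub_C_univ, roots_prod_X_sub_C_univ] at hroots
  have := congrArg (fun s => (s.map g).prod) hroots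
  simp only [Multiset.map_map] at this
  exact this

theorem C_mul_X_sub_C_eq {K : Type*} [Field K] {t : K} (ht : t ≠ 0) (s : K) :
    Polynomial.C t * Polynomial.X - Polynomial.C s =
      Polynomial.C t * (Polynomial.X - Polynomial.C (s / t)) := by
  rw [mul_sub, ← Polynomial.C_mul, mul_div_cancel₀ s ht]

end LinearFactors

section Discriminant

variable {K : Type*} [Field K]

theorem discOfRoots_fin_four (v : Fin 4 → K) :
    discOfRoots v =
      ((v 0 - v 1) * (v 0 - v 2) * (v 0 - v 3) * (v 1 - v 2) * (v 1 - v 3) * (v 2 - v 3)) ^ 2 := by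
  simp only [discOfRoots, Finset.prod_filter, Fin.prod_univ_four, Fin.reduceLT, ↓reduceIte]
  ring

theorem discOfRoots_eq_prod_eval_derivative (v : Fin 4 → K) :
    discOfRoots v = ∏ k, (derivative (∏ i, (Polynomial.X - Polynomial.C (v i)))).eval (v k) := by
  simp only [discOfRoots_fin_four, Fin.prod_univ_four, derivative_mul, derivative_sub, derivative_X,
    derivative_C, Polynomial.eval_add, Polynomial.eval_mul, Polynomial.eval_sub, Polynomial.eval_X,
    Polynomial.eval_C, Polynomial.eval_one, sub_zero, sub_self, mul_zero, zero_mul, add_zero,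
    zero_add]
  ring

theorem discOfRoots_congr {v w : Fin 4 → K}
    (h : ∏ i, (Polynomial.X - Polynomial.C (v i)) = ∏ i, (Polynomial.X - Polynomial.C (w i))) :
    discOfRoots v = discOfRoots w := by
  rw [discOfRoots_eq_prod_eval_derivative, discOfRoots_eq_prod_eval_derivative, h]
  exact prod_comp_eq_of_prod_X_sub_C_eq h fun x => (derivative _).eval x

def rootPairing (v : Fin 4 → K) (i j k l : Fin 4) : K := (v i - v j) * (v k - v l)

theorem discOfRoots_eq_rootPairing (v : Fin 4 → K) :
    discOfRoots v =
      (rootPairing v 0 1 2 3 * rootPairing v 0 2 3 1 * rootPairing v 0 3 1 2) ^ 2 := by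
  simp only [discOfRoots_fin_four, rootPairing]
  ring

end Discriminant

section JInvariant

variable {K : Type*} [Field K]

noncomputable def quarticJ (a b c d : K) (r : Fin 4 → K) : K :=
  256 * (b ^ 2 - 3 * a * c + 12 * d) ^ 3 / discOfRoots r

def jOfPairings (x y z : K) : K := 256 * (-(x * y + y * z + z * x)) ^ 3 / (x * y * z) ^ 2

theorem jOfPairings_smul {t : K} (ht : t ≠ 0) (x y z : K) :
    jOfPairings (t * x) (t * y) (t * z) = jOfPairings x y z := by
  have numerator : 256 * (-(t * x * (t * y) + t * y * (t * z) + t * z * (t * x))) ^ 3 =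
      t ^ 6 * (256 * (-(x * y + y * z + z * x)) ^ 3) := by ring
  have denominator : (t * x * (t * y) * (t * z)) ^ 2 = t ^ 6 * (x * y * z) ^ 2 := by ring
  rw [jOfPairings, jOfPairings, numerator, denominator, mul_div_mul_left _ _ (pow_ne_zero 6 ht)]

theorem quarticJ_eq_jOfPairings {a b c d : K} {v : Fin 4 → K}
    (h : dehom (quarticPoly a b c d) = ∏ i, (Polynomial.X - Polynomial.C (v i))) :
    quarticJ a b c d v =
      jOfPairings (rootPairing v 0 1 2 3) (rootPairing v 0 2 3 1) (rootPairing v 0 3 1 2) := by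
  obtain ⟨rfl, rfl, rfl, rfl⟩ := quarticPoly_coeffs_of_dehom_eq_prod h
  rw [quarticJ, jOfPairings, discOfRoots_eq_rootPairing]
  congr 1
  simp only [rootPairing]
  ring

end JInvariant

section Moebius

variable {K : Type*} [Field K] (M : Matrix (Fin 2) (Fin 2) K)

def moebiusTransform (x : K) : K := (M 0 0 * x + M 0 1) / (M 1 0 * x + M 1 1)

theorem moebiusTransform_sub {x y : K} (hx : M 1 0 * x + M 1 1 ≠ 0)
    (hy : M 1 0 * y + M 1 1 ≠ 0) :
    moebiusTransform M x - moebiusTransform M y =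
      M.det * (x - y) / ((M 1 0 * x + M 1 1) * (M 1 0 * y + M 1 1)) := by
  rw [moebiusTransform, moebiusTransform, div_sub_div _ _ hx hy, Matrix.det_fin_two]
  ring

theorem rootPairing_moebiusTransform {v : Fin 4 → K} (hv : ∀ i, M 1 0 * v i + M 1 1 ≠ 0)
    (i j k l : Fin 4) :
    rootPairing (moebiusTransform M ∘ v) i j k l =
      M.det ^ 2 / ((M 1 0 * v i + M 1 1) * (M 1 0 * v j + M 1 1) * (M 1 0 * v k + M 1 1) *
        (M 1 0 * v l + M 1 1)) * rootPairing v i j k l := by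
  simp only [rootPairing, Function.comp_apply, moebiusTransform_sub M (hv _) (hv _)]
  field_simp

theorem jOfPairings_moebiusTransform (hM : M.det ≠ 0) {v : Fin 4 → K}
    (hv : ∀ i, M 1 0 * v i + M 1 1 ≠ 0) :
    jOfPairings (rootPairing (moebiusTransform M ∘ v) 0 1 2 3)
        (rootPairing (moebiusTransform M ∘ v) 0 2 3 1)
        (rootPairing (moebiusTransform M ∘ v) 0 3 1 2) =
      jOfPairings (rootPairing v 0 1 2 3) (rootPairing v 0 2 3 1) (rootPairing v 0 3 1 2) := by
  set t := fun i => M 1 0 * v i + M 1 1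
  have ht : t 0 * t 1 * t 2 * t 3 ≠ 0 :=
    mul_ne_zero (mul_ne_zero (mul_ne_zero (hv 0) (hv 1)) (hv 2)) (hv 3)
  simp only [rootPairing_moebiusTransform M hv]
  rw [show t 0 * t 2 * t 3 * t 1 = t 0 * t 1 * t 2 * t 3 by ring,
    show t 0 * t 3 * t 1 * t 2 = t 0 * t 1 * t 2 * t 3 by ring]
  exact jOfPairings_smul (div_ne_zero (pow_ne_zero 2 hM) ht) _ _ _

theorem dehom_substM_adjugate_X_sub_C_mul_X (x : K) :
    dehom (substM M.adjugate (X 0 - C x * X 1)) =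
      Polynomial.C (M 1 0 * x + M 1 1) * Polynomial.X - Polynomial.C (M 0 0 * x + M 0 1) := by
  simp only [dehom, substM, Matrix.adjugate_fin_two, Matrix.of_apply, Matrix.cons_val',
    Matrix.cons_val_zero, Matrix.cons_val_one, Matrix.cons_val_fin_one, map_sub, map_mul, map_add,
    map_neg, MvPolynomial.aeval_X, MvPolynomial.algHom_C, MvPolynomial.algebraMap_eq,
    Polynomial.algebraMap_eq]
  ring

theorem dehom_eq_prod_X_sub_moebiusTransform {U : K} (hU : U ≠ 0) {a b c d a' b' c' d' : K}
    {r : Fin 4 → K}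
    (hr : dehom (quarticPoly a b c d) = ∏ i, (Polynomial.X - Polynomial.C (r i)))
    (horbit : U • quarticPoly a' b' c' d' = substM M.adjugate (quarticPoly a b c d)) :
    (∀ i, M 1 0 * r i + M 1 1 ≠ 0) ∧ dehom (quarticPoly a' b' c' d') =
      ∏ i, (Polynomial.X - Polynomial.C (moebiusTransform M (r i))) := by
  have hf : quarticPoly a b c d = ∏ i, (X 0 - C (r i) * X 1) := by
    obtain ⟨rfl, rfl, rfl, rfl⟩ := quarticPoly_coeffs_of_dehom_eq_prod hr
    exact quarticPoly_vieta r
  have hlin : Polynomial.C U * dehom (quarticPoly a' b' c' d') = ∏ i,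
      (Polynomial.C (M 1 0 * r i + M 1 1) * Polynomial.X - Polynomial.C (M 0 0 * r i + M 0 1)) := by
    rw [← Polynomial.smul_eq_C_mul, dehom, ← map_smul, ← dehom, horbit, hf, substM, map_prod,
      dehom, map_prod]
    exact Finset.prod_congr rfl fun i _ => dehom_substM_adjugate_X_sub_C_mul_X M (r i)
  have hU_eq : U = ∏ i, (M 1 0 * r i + M 1 1) := by
    simpa [dehom_quarticPoly] using
      (congrArg (Polynomial.coeff · 4) hlin).trans (coeff_prod_C_mul_X_sub_C _ _)
  have ht i : M 1 0 * r i + M 1 1 ≠ 0 := fun h =>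
    hU (hU_eq ▸ Finset.prod_eq_zero (Finset.mem_univ i) h)
  refine ⟨ht, mul_left_cancel₀ (Polynomial.C_ne_zero.2 hU) ?_⟩
  rw [hlin, hU_eq, map_prod, ← Finset.prod_mul_distrib]
  exact Finset.prod_congr rfl fun i _ => C_mul_X_sub_C_eq (ht i) _

theorem quarticJ_eq_of_substM_adjugate (hM : M.det ≠ 0) {U : K} (hU : U ≠ 0)
    {a b c d a' b' c' d' : K} {r r' : Fin 4 → K}
    (hr : dehom (quarticPoly a b c d) = ∏ i, (Polynomial.X - Polynomial.C (r i)))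
    (hr' : dehom (quarticPoly a' b' c' d') = ∏ i, (Polynomial.X - Polynomial.C (r' i)))
    (horbit : U • quarticPoly a' b' c' d' = substM M.adjugate (quarticPoly a b c d)) :
    quarticJ a' b' c' d' r' = quarticJ a b c d r := by
  obtain ⟨hden, hw⟩ := dehom_eq_prod_X_sub_moebiusTransform M hU hr horbit
  calc quarticJ a' b' c' d' r' = quarticJ a' b' c' d' (moebiusTransform M ∘ r) := by
        rw [quarticJ, quarticJ, discOfRoots_congr (hr'.symm.trans hw)]
        rfl
    _ = jOfPairings (rootPairing r 0 1 2 3) (rootPairing r 0 2 3 1) (rootPairing r 0 3 1 2) := by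
        rw [quarticJ_eq_jOfPairings (v := moebiusTransform M ∘ r) hw,
          jOfPairings_moebiusTransform M hM hden]
    _ = quarticJ a b c d r := (quarticJ_eq_jOfPairings hr).symm

end Moebius

theorem j_invariant_of_quartic_is_PGL2_invariant_general
    {F : Type*} [Field F]
    {K : Type*} [Field K] [Algebra F K]
    (a b c d : F) (r : Fin 4 → K)
    (hroots : (dehom (quarticPoly a b c d)).map (algebraMap F K) =
      ∏ i, (Polynomial.X - Polynomial.C (r i)))
    (M : GL (Fin 2) F) (a' b' c' d' : F) (u : Fˣ)
    (horbit : (u : F) • quarticPoly a' b' c' d' =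
      substM (Matrix.adjugate (M : Matrix (Fin 2) (Fin 2) F)) (quarticPoly a b c d))
    (r' : Fin 4 → K)
    (hroots' : (dehom (quarticPoly a' b' c' d')).map (algebraMap F K) =
      ∏ i, (Polynomial.X - Polynomial.C (r' i))) :
    algebraMap F K (256 * (b' ^ 2 - 3 * a' * c' + 12 * d') ^ 3) / discOfRoots r' =
      algebraMap F K (256 * (b ^ 2 - 3 * a * c + 12 * d) ^ 3) / discOfRoots r := by
  set φ := algebraMap F K
  have hM : (φ.mapMatrix (M : Matrix (Fin 2) (Fin 2) F)).det ≠ 0 := by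
    rw [← RingHom.map_det]
    exact (map_ne_zero φ).2 ((Matrix.isUnit_iff_isUnit_det _).1 M.isUnit).ne_zero
  have horbitK := congrArg (MvPolynomial.map φ) horbit
  rw [MvPolynomial.smul_eq_C_mul, map_mul, MvPolynomial.map_C, ← MvPolynomial.smul_eq_C_mul,
    map_quarticPoly, map_substM, RingHom.map_adjugate, map_quarticPoly] at horbitK
  rw [map_dehom, map_quarticPoly] at hroots hroots'
  simpa [quarticJ, map_ofNat] using
    quarticJ_eq_of_substM_adjugate _ hM ((map_ne_zero φ).2 u.ne_zero) hroots hroots' horbitK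

/-- Let `q` be an odd prime power, `F` the field with `q` elements, and
`f = x⁴+ax³y+bx²y²+cxy³+dy⁴` a separable quartic over `F`, with roots `r : Fin 4 → K`
of `f(x,1)` in an algebraic closure `K` and discriminant `Δ = ∏_{i<j}(rᵢ−rⱼ)²`.
Define `j(f) = 256(b²−3ac+12d)³/Δ`.  If the class of a quartic
`g = x⁴+a'x³y+b'x²y²+c'xy³+d'y⁴` is the image of `f` under an element of `PGL₂(F)`
(i.e. a scalar multiple of `g` equals `f(d₀x−b₀y, −c₀x+a₀y)` for an invertible
`[[a₀,b₀],[c₀,d₀]]`, the substitution matrix being the adjugate), then `j(g) = j(f)`. -/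
theorem j_invariant_of_quartic_is_PGL2_invariant
    {F : Type*} [Field F] [Fintype F] (q : ℕ) (hq : Fintype.card F = q)
    (hodd : Odd q)
    {K : Type*} [Field K] [Algebra F K] [IsAlgClosure F K]
    (a b c d : F) (r : Fin 4 → K)
    (hroots : (dehom (quarticPoly a b c d)).map (algebraMap F K) =
      ∏ i, (Polynomial.X - Polynomial.C (r i)))
    (hsep : Function.Injective r)
    (M : GL (Fin 2) F) (a' b' c' d' : F) (u : Fˣ)
    (horbit : (u : F) • quarticPoly a' b' c' d' =
      substM (Matrix.adjugate (M : Matrix (Fin 2) (Fin 2) F)) (quarticPoly a b c d))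
    (r' : Fin 4 → K)
    (hroots' : (dehom (quarticPoly a' b' c' d')).map (algebraMap F K) =
      ∏ i, (Polynomial.X - Polynomial.C (r' i))) :
    algebraMap F K (256 * (b' ^ 2 - 3 * a' * c' + 12 * d') ^ 3) / discOfRoots r' =
      algebraMap F K (256 * (b ^ 2 - 3 * a * c + 12 * d) ^ 3) / discOfRoots r :=
  j_invariant_of_quartic_is_PGL2_invariant_general a b c d r hroots M a' b' c' d' u horbit r'
    hroots'
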